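/- arXiv:2112.12570 — 4 statements merged into one kernel-verified Lean document; each statement's English description precedes it below -/
import Mathlib

section
/- Let 0 < p ≤ 1 ≤ s < ∞ with p < s and λ > n(s/p - 1). Suppose M : R^n → C satisfies (∫_B |M|^s)^{1/s} ≤ r^{n(1/s - 1/p)} and (∫_{B^c} |M(x)|^s |x - x_B|^λ dx)^{1/s} ≤ r^{λ/s + n(1/s - 1/p)}, with B = B(x_B, r). Then for every multi-index α with |α| ≤ n(1/p - 1), we have |∫_{R^n} M(x)(x - x_B)^α dx| ≤ C r^{|α| - n(1/p - 1)}, where C depends only on n, s, p, λ. -/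
/-!
Split the moment integral at `B = B(x_B, r)` and let `γ = n (1/p - 1)`. On `B`,
`|x - x_B| ^ |α| ≤ r ^ |α|`, and Hölder against the volume of `B` turns the `Lˢ` size condition
into `∫_B |M| ≲ r ^ (-γ)`. Off `B`, `|α| ≤ γ` gives `|x - x_B| ^ |α| ≤ r ^ (|α| - γ) |x - x_B| ^ γ`,
and the moment of order `γ` over `Bᶜ` is bounded independently of `r`: for `s = 1` directly from
the weighted condition since `γ < λ`, and for `s > 1` by Hölder with the weight
`|x - x_B| ^ (λ / s)`, the remaining factor being
`∫_{|y| ≥ r} |y| ^ c = r ^ (n + c) ∫_{|z| ≥ 1} |z| ^ c`, finite because `λ > n (s/p - 1)` forces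
`c < -n`.
-/

open MeasureTheory Metric ENNReal Module

section Holder

variable {X : Type*} [MeasurableSpace X] (μ : Measure X)

lemma lintegral_le_lintegral_rpow_mul_measure_univ {s : ℝ} (hs : 1 ≤ s) {f : X → ℝ≥0∞}
    (hf : AEMeasurable f μ) :
    ∫⁻ x, f x ∂μ ≤ (∫⁻ x, f x ^ s ∂μ) ^ (1 / s) * μ Set.univ ^ (1 - 1 / s) := by
  rcases hs.eq_or_lt with rfl | hs
  · simp
  have hsq := Real.HolderConjugate.conjExponent hs
  have hq : 1 / s.conjExponent = 1 - 1 / s := by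
    rw [eq_sub_iff_add_eq', one_div, one_div, hsq.inv_add_inv_eq_one]
  simpa [hq] using ENNReal.lintegral_mul_le_Lp_mul_Lq μ hsq hf aemeasurable_const (g := 1)

/-- Hölder's inequality after splitting the weight as `w ^ b = w ^ (l / s) * w ^ (b - l / s)`. -/
lemma lintegral_mul_rpow_le_of_holderConjugate {s q : ℝ} (hsq : s.HolderConjugate q)
    {f : X → ℝ≥0∞} (hf : AEMeasurable f μ) {w : X → ℝ} (hw : Measurable w)
    (hw0 : ∀ᵐ x ∂μ, 0 < w x) (b l : ℝ) :
    ∫⁻ x, f x * ENNReal.ofReal (w x ^ b) ∂μ ≤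
      (∫⁻ x, f x ^ s * ENNReal.ofReal (w x ^ l) ∂μ) ^ (1 / s) *
        (∫⁻ x, ENNReal.ofReal (w x ^ ((b - l / s) * q)) ∂μ) ^ (1 / q) := by
  have hsplit : ∀ᵐ x ∂μ, f x * ENNReal.ofReal (w x ^ b) =
      (f x * ENNReal.ofReal (w x ^ (l / s))) * ENNReal.ofReal (w x ^ (b - l / s)) := by
    filter_upwards [hw0] with x hx
    rw [mul_assoc, ← ENNReal.ofReal_mul (by positivity), ← Real.rpow_add hx, add_sub_cancel]
  have hfirst : ∀ᵐ x ∂μ, (f x * ENNReal.ofReal (w x ^ (l / s))) ^ s =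
      f x ^ s * ENNReal.ofReal (w x ^ l) := by
    filter_upwards [hw0] with x hx
    rw [ENNReal.mul_rpow_of_nonneg _ _ hsq.nonneg, ENNReal.ofReal_rpow_of_pos (by positivity),
      ← Real.rpow_mul hx.le, div_mul_cancel₀ _ hsq.ne_zero]
  have hsecond : ∀ᵐ x ∂μ, ENNReal.ofReal (w x ^ (b - l / s)) ^ q =
      ENNReal.ofReal (w x ^ ((b - l / s) * q)) := by
    filter_upwards [hw0] with x hx
    rw [ENNReal.ofReal_rpow_of_pos (by positivity), ← Real.rpow_mul hx.le]
  rw [lintegral_congr_ae hsplit, ← lintegral_congr_ae hfirst, ← lintegral_congr_ae hsecond]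
  exact ENNReal.lintegral_mul_le_Lp_mul_Lq μ hsq (hf.mul (by fun_prop)) (by fun_prop)

end Holder

lemma rpow_le_rpow_sub_mul_rpow {r t a b : ℝ} (hr : 0 < r) (hrt : r ≤ t) (hab : a ≤ b) :
    t ^ a ≤ r ^ (a - b) * t ^ b := by
  have ht : 0 < t := hr.trans_le hrt
  calc t ^ a = t ^ (a - b) * t ^ b := by rw [← Real.rpow_add ht, sub_add_cancel]
    _ ≤ r ^ (a - b) * t ^ b :=
      mul_le_mul_of_nonneg_right (Real.rpow_le_rpow_of_nonpos hr hrt (by linarith))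
        (by positivity)

lemma abs_prod_pow_le_norm_rpow_sum {ι : Type*} [Fintype ι] (v : EuclideanSpace ℝ ι)
    (α : ι → ℕ) : |∏ i, v i ^ α i| ≤ ‖v‖ ^ (∑ i, (α i : ℝ)) := by
  rw [← Nat.cast_sum, Real.rpow_natCast, Finset.abs_prod, ← Finset.prod_pow_eq_pow_sum]
  gcongr with i
  rw [abs_pow]
  gcongr
  exact (Real.norm_eq_abs _).symm.trans_le (PiLp.norm_apply_le v i)

section BallSplitting

variable {E : Type*} [NormedAddCommGroup E] [MeasurableSpace E] [OpensMeasurableSpace E]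
  (μ : Measure E)

lemma setLIntegral_compl_ball_mul_rpow_le {f : E → ℝ≥0∞} (x₀ : E) {r a b : ℝ} (hr : 0 < r)
    (hab : a ≤ b) :
    ∫⁻ x in (ball x₀ r)ᶜ, f x * ENNReal.ofReal (‖x - x₀‖ ^ a) ∂μ ≤
      ENNReal.ofReal (r ^ (a - b)) *
        ∫⁻ x in (ball x₀ r)ᶜ, f x * ENNReal.ofReal (‖x - x₀‖ ^ b) ∂μ := by
  rw [← lintegral_const_mul' _ _ ENNReal.ofReal_ne_top]
  refine setLIntegral_mono' measurableSet_ball.compl fun x hx ↦ ?_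
  have hx : r ≤ ‖x - x₀‖ := by simpa [dist_eq_norm] using hx
  rw [mul_left_comm, ← ENNReal.ofReal_mul (by positivity)]
  gcongr
  exact rpow_le_rpow_sub_mul_rpow hr hx hab

lemma lintegral_mul_rpow_norm_sub_le {f : E → ℝ≥0∞} (x₀ : E) {r a γ : ℝ} (hr : 0 < r)
    (ha : 0 ≤ a) (haγ : a ≤ γ) {C₁ C₂ : ℝ≥0∞}
    (hball : ∫⁻ x in ball x₀ r, f x ∂μ ≤ C₁ * ENNReal.ofReal (r ^ (-γ)))
    (hcompl : ∫⁻ x in (ball x₀ r)ᶜ, f x * ENNReal.ofReal (‖x - x₀‖ ^ γ) ∂μ ≤ C₂) :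
    ∫⁻ x, f x * ENNReal.ofReal (‖x - x₀‖ ^ a) ∂μ ≤
      (C₁ + C₂) * ENNReal.ofReal (r ^ (a - γ)) := by
  have hnear : ∫⁻ x in ball x₀ r, f x * ENNReal.ofReal (‖x - x₀‖ ^ a) ∂μ ≤
      ENNReal.ofReal (r ^ a) * ∫⁻ x in ball x₀ r, f x ∂μ := by
    rw [← lintegral_const_mul' _ _ ENNReal.ofReal_ne_top]
    refine setLIntegral_mono' measurableSet_ball fun x hx ↦ ?_
    rw [mul_comm]
    gcongr
    exact (mem_ball_iff_norm.1 hx).le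
  rw [← lintegral_add_compl _ measurableSet_ball]
  calc _ ≤ ENNReal.ofReal (r ^ a) * (C₁ * ENNReal.ofReal (r ^ (-γ))) +
        ENNReal.ofReal (r ^ (a - γ)) * C₂ :=
        add_le_add (hnear.trans (by gcongr))
          ((setLIntegral_compl_ball_mul_rpow_le μ x₀ hr haγ).trans (by gcongr))
    _ = _ := by
        rw [mul_left_comm, ← ENNReal.ofReal_mul (by positivity), ← Real.rpow_add hr,
          ← sub_eq_add_neg]
        ring

lemma setLIntegral_compl_ball_mul_rpow_le_one {f : E → ℝ≥0∞} (x₀ : E) {r γ l : ℝ} (hr : 0 < r)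
    (hγl : γ ≤ l)
    (h : ∫⁻ x in (ball x₀ r)ᶜ, f x * ENNReal.ofReal (‖x - x₀‖ ^ l) ∂μ ≤
      ENNReal.ofReal (r ^ (l - γ))) :
    ∫⁻ x in (ball x₀ r)ᶜ, f x * ENNReal.ofReal (‖x - x₀‖ ^ γ) ∂μ ≤ 1 :=
  calc _ ≤ ENNReal.ofReal (r ^ (γ - l)) *
        ∫⁻ x in (ball x₀ r)ᶜ, f x * ENNReal.ofReal (‖x - x₀‖ ^ l) ∂μ :=
        setLIntegral_compl_ball_mul_rpow_le μ x₀ hr hγl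
    _ ≤ ENNReal.ofReal (r ^ (γ - l)) * ENNReal.ofReal (r ^ (l - γ)) := by gcongr
    _ = 1 := by
        rw [← ENNReal.ofReal_mul (by positivity), ← Real.rpow_add hr, sub_add_sub_cancel,
          sub_self, Real.rpow_zero, ENNReal.ofReal_one]

end BallSplitting

section AddHaar

variable {E : Type*} [NormedAddCommGroup E] [NormedSpace ℝ E] [FiniteDimensional ℝ E]
  [MeasurableSpace E] [BorelSpace E] (μ : Measure E) [μ.IsAddHaarMeasure]

lemma lintegral_eq_ofReal_pow_mul_lintegral_comp_smul {f : E → ℝ≥0∞} (hf : Measurable f)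
    {R : ℝ} (hR : 0 < R) :
    ∫⁻ x, f x ∂μ = ENNReal.ofReal (R ^ finrank ℝ E) * ∫⁻ x, f (R • x) ∂μ := by
  rw [← lintegral_map hf (measurable_const_smul R), Measure.map_addHaar_smul μ hR.ne',
    lintegral_smul_measure, smul_eq_mul, ← mul_assoc, ← ENNReal.ofReal_mul (by positivity),
    abs_of_pos (by positivity), mul_inv_cancel₀ (by positivity), ENNReal.ofReal_one, one_mul]

lemma setLIntegral_compl_ball_rpow_norm_sub (x₀ : E) {r : ℝ} (hr : 0 < r) (c : ℝ) :
    ∫⁻ x in (ball x₀ r)ᶜ, ENNReal.ofReal (‖x - x₀‖ ^ c) ∂μ =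
      ENNReal.ofReal (r ^ (finrank ℝ E + c)) *
        ∫⁻ z in (ball 0 1)ᶜ, ENNReal.ofReal (‖z‖ ^ c) ∂μ := by
  set g : ℝ → E → ℝ≥0∞ := fun ρ ↦ (ball 0 ρ)ᶜ.indicator fun z ↦ ENNReal.ofReal (‖z‖ ^ c)
  have hg : ∀ ρ, Measurable (g ρ) := fun ρ ↦ by
    apply Measurable.indicator _ measurableSet_ball.compl
    fun_prop
  have htranslate :
      ∫⁻ x in (ball x₀ r)ᶜ, ENNReal.ofReal (‖x - x₀‖ ^ c) ∂μ = ∫⁻ y, g r y ∂μ := by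
    rw [← lintegral_indicator measurableSet_ball.compl, ← lintegral_sub_right_eq_self (g r) x₀]
    congr with x
    simp [g, Set.indicator, dist_eq_norm]
  have hscale : ∀ z, g r (r • z) = ENNReal.ofReal (r ^ c) * g 1 z := fun z ↦ by
    simp only [g, Set.indicator, Set.mem_compl_iff, mem_ball_zero_iff, norm_smul,
      Real.norm_of_nonneg hr.le, mul_lt_iff_lt_one_right hr]
    split_ifs
    · simp
    · rw [Real.mul_rpow hr.le (norm_nonneg z), ENNReal.ofReal_mul (by positivity)]
  rw [htranslate, lintegral_eq_ofReal_pow_mul_lintegral_comp_smul μ (hg r) hr]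
  simp_rw [hscale]
  rw [lintegral_const_mul _ (hg 1), lintegral_indicator measurableSet_ball.compl, ← mul_assoc,
    ← ENNReal.ofReal_mul (by positivity), Real.rpow_add hr, Real.rpow_natCast]

lemma setLIntegral_compl_ball_rpow_norm_lt_top {c : ℝ} (hc : c < -finrank ℝ E) :
    ∫⁻ z in (ball (0 : E) 1)ᶜ, ENNReal.ofReal (‖z‖ ^ c) ∂μ < ∞ := by
  have hbound : ∀ z ∈ (ball (0 : E) 1)ᶜ,
      ENNReal.ofReal (‖z‖ ^ c) ≤
        ENNReal.ofReal (2 ^ (-c)) * ENNReal.ofReal ((1 + ‖z‖) ^ c) := by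
    intro z hz
    have hz : 1 ≤ ‖z‖ := by simpa using hz
    rw [← ENNReal.ofReal_mul (by positivity)]
    apply ENNReal.ofReal_le_ofReal
    -- `1 + ‖z‖ ≤ 2 ‖z‖` and `c ≤ 0`
    calc ‖z‖ ^ c = 2 ^ (-c) * (2 * ‖z‖) ^ c := by
          rw [Real.mul_rpow zero_le_two (by positivity), ← mul_assoc, ← Real.rpow_add two_pos,
            neg_add_cancel, Real.rpow_zero, one_mul]
      _ ≤ 2 ^ (-c) * (1 + ‖z‖) ^ c := by
          gcongr ?_ * ?_
          exact Real.rpow_le_rpow_of_nonpos (by positivity) (by linarith)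
            (hc.le.trans (by simp))
  calc _ ≤ ∫⁻ z in (ball (0 : E) 1)ᶜ,
        ENNReal.ofReal (2 ^ (-c)) * ENNReal.ofReal ((1 + ‖z‖) ^ c) ∂μ :=
        setLIntegral_mono' measurableSet_ball.compl hbound
    _ ≤ ENNReal.ofReal (2 ^ (-c)) * ∫⁻ z, ENNReal.ofReal ((1 + ‖z‖) ^ c) ∂μ := by
        rw [← lintegral_const_mul' _ _ ENNReal.ofReal_ne_top]
        exact setLIntegral_le_lintegral _ _
    _ < ∞ := by
        refine ENNReal.mul_lt_top ENNReal.ofReal_lt_top ?_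
        simpa using finite_integral_one_add_norm (μ := μ) (r := -c) (by linarith)

lemma exists_setLIntegral_ball_le {p s : ℝ} (hs : 1 ≤ s) :
    ∃ C < ∞, ∀ f : E → ℝ≥0∞, Measurable f → ∀ (x₀ : E) (r : ℝ), 0 < r →
      (∫⁻ x in ball x₀ r, f x ^ s ∂μ) ^ (1 / s) ≤
        ENNReal.ofReal (r ^ (finrank ℝ E * (1 / s - 1 / p))) →
      ∫⁻ x in ball x₀ r, f x ∂μ ≤ C * ENNReal.ofReal (r ^ (-(finrank ℝ E * (1 / p - 1)))) := by
  have hs' : 0 ≤ 1 - 1 / s := sub_nonneg.2 ((div_le_one (by linarith)).2 hs)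
  refine ⟨μ (ball 0 1) ^ (1 - 1 / s), rpow_lt_top_of_nonneg hs' measure_ball_lt_top.ne,
    fun f hf x₀ r hr h ↦ ?_⟩
  calc ∫⁻ x in ball x₀ r, f x ∂μ
      ≤ (∫⁻ x in ball x₀ r, f x ^ s ∂μ) ^ (1 / s) * μ (ball x₀ r) ^ (1 - 1 / s) := by
        simpa using lintegral_le_lintegral_rpow_mul_measure_univ (μ.restrict (ball x₀ r)) hs
          hf.aemeasurable
    _ ≤ ENNReal.ofReal (r ^ (finrank ℝ E * (1 / s - 1 / p))) *
        (ENNReal.ofReal (r ^ finrank ℝ E) * μ (ball 0 1)) ^ (1 - 1 / s) := by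
        rw [Measure.addHaar_ball_of_pos μ _ hr]
        gcongr
    _ = _ := by
        rw [ENNReal.mul_rpow_of_nonneg _ _ hs', ENNReal.ofReal_rpow_of_pos (by positivity),
          ← Real.rpow_natCast, ← Real.rpow_mul hr.le, ← mul_assoc,
          ← ENNReal.ofReal_mul (by positivity), ← Real.rpow_add hr, mul_comm]
        ring_nf

lemma exists_setLIntegral_compl_ball_mul_rpow_le {p s l : ℝ} (hs : 1 ≤ s)
    (hl : finrank ℝ E * (s / p - 1) < l) :
    ∃ K < ∞, ∀ f : E → ℝ≥0∞, Measurable f → ∀ (x₀ : E) (r : ℝ), 0 < r →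
      (∫⁻ x in (ball x₀ r)ᶜ, f x ^ s * ENNReal.ofReal (‖x - x₀‖ ^ l) ∂μ) ^ (1 / s) ≤
        ENNReal.ofReal (r ^ (l / s + finrank ℝ E * (1 / s - 1 / p))) →
      ∫⁻ x in (ball x₀ r)ᶜ, f x * ENNReal.ofReal (‖x - x₀‖ ^ (finrank ℝ E * (1 / p - 1))) ∂μ
        ≤ K := by
  set d : ℝ := (finrank ℝ E : ℝ)
  rcases hs.eq_or_lt with rfl | hs
  · refine ⟨1, one_lt_top, fun f _ x₀ r hr h ↦
      setLIntegral_compl_ball_mul_rpow_le_one μ x₀ hr hl.le ?_⟩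
    rw [show l - d * (1 / p - 1) = l / 1 + d * (1 / 1 - 1 / p) by ring]
    simpa using h
  have hsq := Real.HolderConjugate.conjExponent hs
  set q := s.conjExponent
  have hinv : s⁻¹ + q⁻¹ = 1 := hsq.inv_add_inv_eq_one
  have hq : 0 < q := hsq.symm.pos
  have hs0 : 0 < s := hsq.pos
  set c := (d * (1 / p - 1) - l / s) * q
  have hc : c < -d := by
    have hcd : c + d = q / s * (d * (s / p - 1) - l) := by
      simp only [c]
      field_simp at hinv ⊢
      linear_combination d * hinv
    have := mul_neg_of_pos_of_neg (div_pos hq hs0) (sub_neg.2 hl)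
    linarith
  have hexp : l / s + d * (1 / s - 1 / p) + (d + c) * (1 / q) = 0 := by
    simp only [c]
    field_simp at hinv ⊢
    linear_combination d * hinv
  set T := ∫⁻ z in (ball 0 1)ᶜ, ENNReal.ofReal (‖z‖ ^ c) ∂μ
  refine ⟨T ^ (1 / q), rpow_lt_top_of_nonneg (by positivity)
    (setLIntegral_compl_ball_rpow_norm_lt_top μ hc).ne, fun f hf x₀ r hr h ↦ ?_⟩
  have hpos : ∀ᵐ x ∂μ.restrict (ball x₀ r)ᶜ, 0 < ‖x - x₀‖ := by
    refine ae_restrict_of_forall_mem measurableSet_ball.compl fun x hx ↦ ?_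
    exact hr.trans_le (by simpa [dist_eq_norm] using hx)
  calc _ ≤ (∫⁻ x in (ball x₀ r)ᶜ, f x ^ s * ENNReal.ofReal (‖x - x₀‖ ^ l) ∂μ) ^ (1 / s) *
        (∫⁻ x in (ball x₀ r)ᶜ, ENNReal.ofReal (‖x - x₀‖ ^ c) ∂μ) ^ (1 / q) :=
        lintegral_mul_rpow_le_of_holderConjugate _ hsq hf.aemeasurable (by fun_prop) hpos _ _
    _ ≤ ENNReal.ofReal (r ^ (l / s + d * (1 / s - 1 / p))) *
        (ENNReal.ofReal (r ^ (d + c)) * T) ^ (1 / q) := by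
        rw [setLIntegral_compl_ball_rpow_norm_sub μ x₀ hr]
        gcongr
    _ = T ^ (1 / q) := by
        rw [ENNReal.mul_rpow_of_nonneg _ _ (by positivity),
          ENNReal.ofReal_rpow_of_pos (by positivity), ← Real.rpow_mul hr.le, ← mul_assoc,
          ← ENNReal.ofReal_mul (by positivity), ← Real.rpow_add hr, hexp, Real.rpow_zero,
          ENNReal.ofReal_one, one_mul]

end AddHaar

theorem stmt2_general (n : ℕ) (p s l : ℝ)
    (hs : 1 ≤ s)
    (hl : (n : ℝ) * (s / p - 1) < l) :
    ∃ C : ℝ, 0 < C ∧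
      ∀ (M : EuclideanSpace ℝ (Fin n) → ℂ) (xB : EuclideanSpace ℝ (Fin n)) (r : ℝ),
        0 < r → Measurable M →
        (∫⁻ x in ball xB r, (‖M x‖₊ : ℝ≥0∞) ^ s) ^ (1 / s)
          ≤ ENNReal.ofReal (r ^ ((n : ℝ) * (1 / s - 1 / p))) →
        (∫⁻ x in (ball xB r)ᶜ,
            (‖M x‖₊ : ℝ≥0∞) ^ s * ENNReal.ofReal (‖x - xB‖ ^ l)) ^ (1 / s)
          ≤ ENNReal.ofReal (r ^ (l / s + (n : ℝ) * (1 / s - 1 / p))) →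
        ∀ α : Fin n → ℕ, (∑ i, (α i : ℝ)) ≤ (n : ℝ) * (1 / p - 1) →
          ‖∫ x, M x * ((∏ i, (x i - xB i) ^ α i : ℝ) : ℂ)‖ ≤
            C * r ^ ((∑ i, (α i : ℝ)) - (n : ℝ) * (1 / p - 1)) := by
  let μ : Measure (EuclideanSpace ℝ (Fin n)) := volume
  obtain ⟨C₁, hC₁, hball⟩ := exists_setLIntegral_ball_le μ (p := p) hs
  obtain ⟨C₂, hC₂, hcompl⟩ := exists_setLIntegral_compl_ball_mul_rpow_le μ hs
    (by rwa [finrank_euclideanSpace_fin])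
  simp only [finrank_euclideanSpace_fin] at hball hcompl
  refine ⟨(C₁ + C₂).toReal + 1, by positivity, fun M xB r hr hM h₁ h₂ α hα ↦ ?_⟩
  have hM' : Measurable fun x ↦ (‖M x‖₊ : ℝ≥0∞) := hM.nnnorm.coe_nnreal_ennreal
  set a := ∑ i, (α i : ℝ)
  have hmoment := lintegral_mul_rpow_norm_sub_le μ xB hr (by positivity) hα
    (hball _ hM' xB r hr h₁) (hcompl _ hM' xB r hr h₂)
  refine (norm_integral_le_lintegral_norm _).trans (toReal_le_of_le_ofReal (by positivity) ?_)
  calc _ ≤ ∫⁻ x, (‖M x‖₊ : ℝ≥0∞) * ENNReal.ofReal (‖x - xB‖ ^ a) := by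
        refine lintegral_mono fun x ↦ ?_
        rw [norm_mul, ENNReal.ofReal_mul (norm_nonneg _), ofReal_norm, Complex.norm_real,
          Real.norm_eq_abs]
        exact mul_le_mul' le_rfl
          (ENNReal.ofReal_le_ofReal (abs_prod_pow_le_norm_rpow_sum (x - xB) α))
    _ ≤ (C₁ + C₂) * ENNReal.ofReal (r ^ (a - n * (1 / p - 1))) := hmoment
    _ = ENNReal.ofReal ((C₁ + C₂).toReal * r ^ (a - n * (1 / p - 1))) := by
        rw [ENNReal.ofReal_mul toReal_nonneg, ofReal_toReal (add_ne_top.2 ⟨hC₁.ne, hC₂.ne⟩)]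
    _ ≤ _ := by
        gcongr
        linarith

/-- Moments up to order `γ_p = n(1/p-1)` of a function satisfying the molecule
size conditions (M1), (M2) are bounded by `C · r^{|α| - γ_p}`. -/
theorem stmt2 (n : ℕ) (p s l : ℝ)
    (hp : 0 < p) (hp1 : p ≤ 1) (hs : 1 ≤ s) (hps : p < s)
    (hl : (n : ℝ) * (s / p - 1) < l) :
    ∃ C : ℝ, 0 < C ∧
      ∀ (M : EuclideanSpace ℝ (Fin n) → ℂ) (xB : EuclideanSpace ℝ (Fin n)) (r : ℝ),
        0 < r → Measurable M →
        (∫⁻ x in ball xB r, (‖M x‖₊ : ℝ≥0∞) ^ s) ^ (1 / s)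
          ≤ ENNReal.ofReal (r ^ ((n : ℝ) * (1 / s - 1 / p))) →
        (∫⁻ x in (ball xB r)ᶜ,
            (‖M x‖₊ : ℝ≥0∞) ^ s * ENNReal.ofReal (‖x - xB‖ ^ l)) ^ (1 / s)
          ≤ ENNReal.ofReal (r ^ (l / s + (n : ℝ) * (1 / s - 1 / p))) →
        ∀ α : Fin n → ℕ, (∑ i, (α i : ℝ)) ≤ (n : ℝ) * (1 / p - 1) →
          ‖∫ x, M x * ((∏ i, (x i - xB i) ^ α i : ℝ) : ℂ)‖ ≤
            C * r ^ ((∑ i, (α i : ℝ)) - (n : ℝ) * (1 / p - 1)) :=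
  stmt2_general n p s l hs hl
end

section
/- With the inductive construction a_{m+1}(t) = a_m(t - 2^{m-1} r) ± a_m(-t - 2^{m-1} r) (sign + if m odd, - if m even) starting from the odd step function a_1(t) = c·sign(t)·1_{[-r,r]}(t) with c = (2^{k-1} r)^{-k} φ(r), one has for all m ≥ 1: ∫ a_m(t) t^ℓ dt = 0 for all integers 0 ≤ ℓ ≤ m - 1, and ∫ a_m(t) t^m dt = C_{m,k} φ(r) r^{m+1-k} where C_{m,k} > 0 satisfies the recursion C_{m+1,k} = (m+1) 2^m C_{m,k} with C_{1,k} = (2^{k-1})^{-k}. -/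
/-!
A step `f ↦ f (· - s) - (-1) ^ m * f (-· - s)` turns a function of parity `(-1) ^ m` into one of
parity `(-1) ^ (m + 1)`, and the `l`-th moment of the new function is `1 - (-1) ^ (m + l)` times
the `l`-th moment of `f` about `-s`. By the binomial theorem that moment is a combination of the
moments of `f` of order `≤ l`, so the vanishing of the moments below `m` is inherited; the
moment of order `m` is killed by the parity factor, and at order `m + 1` only the term `(m + 1) s`
times the `m`-th moment survives (the `(m + 1)`-st moment of `f` vanishes by parity), doubled by the factor.
With `s = 2 ^ (m - 1) r` this is the recursion for `C_{m,k}`, solved by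
`C_{m,k} = m! 2 ^ (m choose 2) / (2 ^ (k - 1)) ^ k`.
-/

open MeasureTheory Finset

theorem MeasureTheory.Integrable.mul_continuous_of_hasCompactSupport {X R : Type*}
    [TopologicalSpace X] [T2Space X] [MeasurableSpace X] [OpensMeasurableSpace X] {μ : Measure X}
    [NormedRing R] [SecondCountableTopologyEither X R] {f g : X → R} (hf : Integrable f μ)
    (hfc : HasCompactSupport f) (hg : Continuous g) : Integrable (fun x => f x * g x) μ :=
  (integrableOn_iff_integrable_of_support_subset
    ((Function.support_mul_subset_left f g).trans (subset_tsupport f))).1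
    (hf.integrableOn.mul_continuousOn hg.continuousOn hfc)

theorem neg_one_pow_mul_self {R : Type*} [Monoid R] [HasDistribNeg R] (n : ℕ) :
    (-1 : R) ^ n * (-1) ^ n = 1 := by
  rw [← pow_add, ← two_mul, pow_mul, neg_one_sq, one_pow]

theorem Real.measurable_sign : Measurable Real.sign :=
  Measurable.ite measurableSet_Iio measurable_const
    (Measurable.ite measurableSet_Ioi measurable_const measurable_const)

theorem Real.sign_mul_self (x : ℝ) : Real.sign x * x = |x| := by
  rcases lt_trichotomy x 0 with h | rfl | h
  · rw [Real.sign_of_neg h, abs_of_neg h, neg_one_mul]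
  · simp
  · rw [Real.sign_of_pos h, abs_of_pos h, one_mul]

theorem Real.abs_sign_le_one (x : ℝ) : |Real.sign x| ≤ 1 := by
  rcases Real.sign_apply_eq x with h | h | h <;> simp [h]

section Moments

variable {f g : ℝ → ℝ}

theorem integral_mul_pow_eq_zero_of_parity {n l : ℕ} (hf : ∀ t, f (-t) = (-1) ^ n * f t)
    (hnl : Odd (n + l)) : ∫ t, f t * t ^ l = 0 := by
  have hodd : ∀ t, f (-t) * (-t) ^ l = -(f t * t ^ l) := fun t => by
    rw [hf, neg_pow t, mul_mul_mul_comm, ← pow_add, hnl.neg_one_pow, neg_one_mul]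
  have h := integral_neg_eq_self (fun t => f t * t ^ l) volume
  simp only [hodd, integral_neg] at h
  linarith

theorem integral_shift_sub_reflect_mul_pow (σ s : ℝ) (l : ℕ)
    (hg : ∀ t, g t = f (t - s) - σ * f (-t - s)) (hint : Integrable fun u => f u * (u + s) ^ l) :
    ∫ t, g t * t ^ l = (1 - σ * (-1) ^ l) * ∫ u, f u * (u + s) ^ l := by
  set F := fun u => f u * (u + s) ^ l
  have hpt : ∀ t, g t * t ^ l = F (t - s) - σ * (-1) ^ l * F (-s - t) := fun t => by
    have hreflect : F (-s - t) = (-1) ^ l * (f (-t - s) * t ^ l) := by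
      simp only [F]
      rw [neg_sub_comm, show -t - s + s = -t by ring, neg_pow]
      ring
    rw [hg, hreflect, show F (t - s) = f (t - s) * t ^ l by simp [F]]
    linear_combination σ * f (-t - s) * t ^ l * neg_one_pow_mul_self (R := ℝ) l
  simp_rw [hpt]
  rw [integral_sub (hint.comp_sub_right s) ((hint.comp_sub_left (-s)).const_mul _),
    integral_const_mul, integral_sub_right_eq_self, integral_sub_left_eq_self]
  ring

theorem integral_mul_add_pow (s : ℝ) (l : ℕ) (hint : ∀ j ≤ l, Integrable fun u => f u * u ^ j) :
    ∫ u, f u * (u + s) ^ l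
      = ∑ j ∈ range (l + 1), (l.choose j : ℝ) * s ^ (l - j) * ∫ u, f u * u ^ j := by
  have hpt : ∀ u, f u * (u + s) ^ l
      = ∑ j ∈ range (l + 1), (l.choose j : ℝ) * s ^ (l - j) * (f u * u ^ j) := fun u => by
    rw [add_pow, mul_sum]
    exact sum_congr rfl fun j _ => by ring
  simp_rw [hpt]
  rw [integral_finsetSum _ fun j hj => (hint j (Nat.lt_succ_iff.1 (mem_range.1 hj))).const_mul _]
  exact sum_congr rfl fun j _ => integral_const_mul _ _

structure HasLeadingMoment (f : ℝ → ℝ) (m : ℕ) (M : ℝ) : Prop where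
  integrable : Integrable f
  hasCompactSupport : HasCompactSupport f
  parity : ∀ t, f (-t) = (-1) ^ m * f t
  moment_eq_zero : ∀ l < m, ∫ t, f t * t ^ l = 0
  moment_eq : ∫ t, f t * t ^ m = M

variable {m : ℕ} {M : ℝ}

theorem HasLeadingMoment.const_mul (h : HasLeadingMoment f m M) (c : ℝ) :
    HasLeadingMoment (fun t => c * f t) m (c * M) where
  integrable := h.integrable.const_mul c
  hasCompactSupport := h.hasCompactSupport.mul_left (f := fun _ => c)
  parity t := by rw [h.parity]; ring
  moment_eq_zero l hl := by simp_rw [mul_assoc, integral_const_mul, h.moment_eq_zero l hl, mul_zero]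
  moment_eq := by simp_rw [mul_assoc, integral_const_mul, h.moment_eq]

theorem HasLeadingMoment.integrable_mul (h : HasLeadingMoment f m M) {φ : ℝ → ℝ}
    (hφ : Continuous φ) : Integrable fun u => f u * φ u :=
  h.integrable.mul_continuous_of_hasCompactSupport h.hasCompactSupport hφ

theorem HasLeadingMoment.shift_sub_reflect (h : HasLeadingMoment f m M) (s : ℝ)
    (hg : ∀ t, g t = f (t - s) - (-1) ^ m * f (-t - s)) :
    HasLeadingMoment g (m + 1) (2 * (m + 1) * s * M) where
  integrable := by
    have hreflect : Integrable fun t => f (-t - s) := by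
      simpa only [neg_sub_comm] using h.integrable.comp_sub_left (-s)
    rw [funext hg]
    exact (h.integrable.comp_sub_right s).sub (hreflect.const_mul _)
  hasCompactSupport := by
    have hshift := h.hasCompactSupport.comp_homeomorph (Homeomorph.subRight s)
    have hreflect := h.hasCompactSupport.comp_homeomorph (Homeomorph.subLeft (-s))
    have hg' : g = f ∘ Homeomorph.subRight s
        - (fun _ => (-1 : ℝ) ^ m) * f ∘ Homeomorph.subLeft (-s) := by
      funext t
      simp [hg, neg_sub_comm]
    rw [hg']
    exact hshift.sub hreflect.mul_left
  parity t := by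
    rw [hg, hg, neg_neg, pow_succ]
    linear_combination -f (-t - s) * neg_one_pow_mul_self (R := ℝ) m
  moment_eq_zero l hl := by
    rw [integral_shift_sub_reflect_mul_pow _ s l hg (h.integrable_mul (by fun_prop))]
    rcases (Nat.lt_succ_iff.1 hl).lt_or_eq with hlm | rfl
    · rw [integral_mul_add_pow s l fun j _ => h.integrable_mul (by fun_prop),
        sum_eq_zero fun j hj => ?_, mul_zero]
      rw [h.moment_eq_zero j (by grind), mul_zero]
    · rw [neg_one_pow_mul_self, sub_self, zero_mul]
  moment_eq := by
    have htop : ∫ t, f t * t ^ (m + 1) = 0 :=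
      integral_mul_pow_eq_zero_of_parity h.parity (by grind)
    rw [integral_shift_sub_reflect_mul_pow _ s _ hg (h.integrable_mul (by fun_prop)),
      integral_mul_add_pow s _ fun j _ => h.integrable_mul (by fun_prop),
      sum_eq_single_of_mem m (by grind) fun j hj hjm => ?_, h.moment_eq]
    · rw [Nat.choose_succ_self_right, Nat.add_sub_cancel_left, pow_one, pow_succ]
      push_cast
      linear_combination (m + 1) * s * M * neg_one_pow_mul_self (R := ℝ) m
    · rcases (Nat.lt_succ_iff.1 (mem_range.1 hj)).lt_or_eq with hj | rfl
      · rw [h.moment_eq_zero j (by grind), mul_zero]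
      · rw [htop, mul_zero]

theorem indicator_Icc_sign_neg (r t : ℝ) :
    (Set.Icc (-r) r).indicator Real.sign (-t) = -(Set.Icc (-r) r).indicator Real.sign t := by
  have hmem : -t ∈ Set.Icc (-r) r ↔ t ∈ Set.Icc (-r) r := by
    simp only [Set.mem_Icc]; constructor <;> intro h <;> constructor <;> linarith [h.1, h.2]
  by_cases ht : t ∈ Set.Icc (-r) r
  · rw [Set.indicator_of_mem ht, Set.indicator_of_mem (hmem.2 ht), Real.sign_neg]
  · rw [Set.indicator_of_notMem ht, Set.indicator_of_notMem (mt hmem.1 ht), neg_zero]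

theorem hasLeadingMoment_indicator_sign {r : ℝ} (hr : 0 ≤ r) :
    HasLeadingMoment ((Set.Icc (-r) r).indicator Real.sign) 1 (r ^ 2) where
  integrable := (integrable_indicator_iff measurableSet_Icc).2 <|
    Measure.integrableOn_of_bounded measure_Icc_lt_top.ne Real.measurable_sign.aestronglyMeasurable
      (M := 1) (ae_of_all _ Real.abs_sign_le_one)
  hasCompactSupport :=
    HasCompactSupport.intro isCompact_Icc fun _ ht => Set.indicator_of_notMem ht _
  parity t := by rw [indicator_Icc_sign_neg, pow_one, neg_one_mul]
  moment_eq_zero l hl := integral_mul_pow_eq_zero_of_parity (n := 1)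
    (fun t => by rw [indicator_Icc_sign_neg, pow_one, neg_one_mul]) (by grind)
  moment_eq := by
    have hpt : ∀ t, (Set.Icc (-r) r).indicator Real.sign t * t ^ 1
        = (Set.Iic r).indicator (fun x => x) |t| := by
      intro t
      simp only [Set.indicator, Set.mem_Icc, Set.mem_Iic, ← abs_le, pow_one]
      split_ifs <;> simp [Real.sign_mul_self]
    simp_rw [hpt]
    rw [integral_comp_abs (f := (Set.Iic r).indicator fun x => x),
      setIntegral_indicator measurableSet_Iic, Set.Ioi_inter_Iic,
      ← intervalIntegral.integral_of_le hr, integral_id]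
    ring

end Moments

noncomputable def momentConst (k m : ℕ) : ℝ := m.factorial * 2 ^ m.choose 2 / (2 ^ (k - 1)) ^ k

theorem momentConst_one (k : ℕ) : momentConst k 1 = ((2 ^ (k - 1)) ^ k)⁻¹ := by
  simp [momentConst]

theorem momentConst_succ (k m : ℕ) :
    momentConst k (m + 1) = (m + 1) * 2 ^ m * momentConst k m := by
  simp only [momentConst, Nat.factorial_succ, Nat.choose_succ_succ, Nat.choose_one_right, pow_add]
  push_cast
  ring

theorem momentConst_pos (k m : ℕ) : 0 < momentConst k m := by
  unfold momentConst; positivity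

theorem stmt6_general (k : ℕ) (r : ℝ) (hr : 0 < r) (φr : ℝ)
    (a : ℕ → ℝ → ℝ)
    (ha1 : ∀ t, a 1 t =
      if 0 < t ∧ t ≤ r then ((2 ^ (k - 1) * r) ^ k)⁻¹ * φr
      else if -r ≤ t ∧ t < 0 then -(((2 ^ (k - 1) * r) ^ k)⁻¹ * φr)
      else 0)
    (hrec : ∀ m, 1 ≤ m → ∀ t,
      a (m + 1) t =
        if Even m
        then a m (t - 2 ^ (m - 1) * r) - a m (-t - 2 ^ (m - 1) * r)
        else a m (t - 2 ^ (m - 1) * r) + a m (-t - 2 ^ (m - 1) * r)) :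
    ∃ Ck : ℕ → ℝ,
      Ck 1 = (((2 : ℝ) ^ (k - 1)) ^ k)⁻¹ ∧
      (∀ m, 1 ≤ m → Ck (m + 1) = ((m : ℝ) + 1) * 2 ^ m * Ck m) ∧
      ∀ m, 1 ≤ m →
        0 < Ck m ∧
        (∀ l : ℕ, l ≤ m - 1 → (∫ t, a m t * t ^ l) = 0) ∧
        (∫ t, a m t * t ^ m) = Ck m * φr * r ^ ((m : ℤ) + 1 - k) := by
  have hbase : a 1
      = fun t => ((2 ^ (k - 1) * r) ^ k)⁻¹ * φr * (Set.Icc (-r) r).indicator Real.sign t := by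
    funext t
    rw [ha1]
    simp only [Set.indicator, Set.mem_Icc, Real.sign]
    split_ifs <;> grind
  have hstep : ∀ m, 1 ≤ m → ∀ t,
      a (m + 1) t = a m (t - 2 ^ (m - 1) * r) - (-1) ^ m * a m (-t - 2 ^ (m - 1) * r) := by
    intro m hm t
    rcases m.even_or_odd with h | h
    · simp [hrec m hm, h, h.neg_one_pow]
    · simp [hrec m hm, Nat.not_even_iff_odd.2 h, h.neg_one_pow]
  have key : ∀ m, 1 ≤ m →
      HasLeadingMoment (a m) m (momentConst k m * φr * r ^ ((m : ℤ) + 1 - k)) := by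
    intro m hm
    induction m, hm using Nat.le_induction with
    | base =>
      rw [hbase]
      convert (hasLeadingMoment_indicator_sign hr.le).const_mul _ using 1
      rw [momentConst_one, Nat.cast_one, show (1 : ℤ) + 1 - k = (2 : ℕ) - (k : ℕ) by ring,
        zpow_sub₀ hr.ne', zpow_natCast, zpow_natCast, mul_pow]
      field_simp
    | succ m hm ih =>
      convert ih.shift_sub_reflect _ (hstep m hm) using 1
      obtain ⟨n, rfl⟩ : ∃ n, m = n + 1 := ⟨m - 1, by omega⟩
      rw [momentConst_succ, show ((n + 1 + 1 : ℕ) : ℤ) + 1 - k = ((n + 1 : ℕ) : ℤ) + 1 - k + 1 by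
        push_cast; ring, zpow_add_one₀ hr.ne', Nat.add_sub_cancel, pow_succ]
      push_cast
      ring
  exact ⟨momentConst k, momentConst_one k, fun m _ => momentConst_succ k m, fun m hm =>
    ⟨momentConst_pos k m, fun l hl => (key m hm).moment_eq_zero l (by omega), (key m hm).moment_eq⟩⟩

/-- Moments of the iterated construction: vanishing moments up to order `m - 1`
and the explicit top moment `∫ a_m(t) t^m dt = C_{m,k} φ(r) r^{m+1-k}`, where
`C_{m,k} > 0` satisfies `C_{m+1,k} = (m+1) 2^m C_{m,k}` and `C_{1,k} = (2^{k-1})^{-k}`. -/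
theorem stmt6 (k : ℕ) (hk : 1 ≤ k) (r : ℝ) (hr : 0 < r) (φr : ℝ)
    (hφ0 : 0 ≤ φr) (hφ1 : φr ≤ 1) (a : ℕ → ℝ → ℝ)
    (ha1 : ∀ t, a 1 t =
      if 0 < t ∧ t ≤ r then ((2 ^ (k - 1) * r) ^ k)⁻¹ * φr
      else if -r ≤ t ∧ t < 0 then -(((2 ^ (k - 1) * r) ^ k)⁻¹ * φr)
      else 0)
    (hrec : ∀ m, 1 ≤ m → ∀ t,
      a (m + 1) t =
        if Even m
        then a m (t - 2 ^ (m - 1) * r) - a m (-t - 2 ^ (m - 1) * r)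
        else a m (t - 2 ^ (m - 1) * r) + a m (-t - 2 ^ (m - 1) * r)) :
    ∃ Ck : ℕ → ℝ,
      Ck 1 = (((2 : ℝ) ^ (k - 1)) ^ k)⁻¹ ∧
      (∀ m, 1 ≤ m → Ck (m + 1) = ((m : ℝ) + 1) * 2 ^ m * Ck m) ∧
      ∀ m, 1 ≤ m →
        0 < Ck m ∧
        (∀ l : ℕ, l ≤ m - 1 → (∫ t, a m t * t ^ l) = 0) ∧
        (∫ t, a m t * t ^ m) = Ck m * φr * r ^ ((m : ℤ) + 1 - k) :=
  stmt6_general k r hr φr a ha1 hrec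
end

section
/- Let k ≥ 2, 0 < r < 2^{1-k}, and let a : R → R be supported in [-2^{k-2} r, 2^{k-2} r] with ||a||_∞ ≤ (2^{k-1} r)^{-k}, satisfying ∫ a(t) t^ℓ dt = 0 for 0 ≤ ℓ ≤ k - 2 and ∫ a(t) t^{k-1} dt = C_k φ(r) for some constant C_k > 0 and φ(r) ∈ [0,1]. Let f(t) = t^{k-1} log|t| η(t) where η ∈ C_c^∞(R) is supported in (-1,1) and equals 1 on [-1/2, 1/2]. Then |∫ a(t) f(t) dt - C_k φ(r) log r| ≤ C̃_k for a constant C̃_k independent of r. -/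
open MeasureTheory

/-- Testing the counterexample atom against `f(t) = t^{k-1} log|t| η(t)` recovers
the logarithmic factor: `|∫ a f - C_k φ(r) log r| ≤ C̃_k`, uniformly in `r`. -/
theorem stmt7 (k : ℕ) (hk : 2 ≤ k) :
    ∃ Ctilde : ℝ, 0 < Ctilde ∧
      ∀ (r Ck φr : ℝ) (a η : ℝ → ℝ),
        0 < r → r < 2 ^ (1 - (k : ℤ)) →
        0 < Ck → 0 ≤ φr → φr ≤ 1 →
        (∀ t, t ∉ Set.Icc (-(2 ^ (k - 2) * r)) (2 ^ (k - 2) * r) → a t = 0) →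
        (∀ t, |a t| ≤ ((2 ^ (k - 1) * r) ^ k)⁻¹) →
        (∀ l : ℕ, l ≤ k - 2 → (∫ t, a t * t ^ l) = 0) →
        (∫ t, a t * t ^ (k - 1)) = Ck * φr →
        ContDiff ℝ (⊤ : ℕ∞) η →
        (∀ t, t ∉ Set.Ioo (-1 : ℝ) 1 → η t = 0) →
        (∀ t, t ∈ Set.Icc (-(1 / 2) : ℝ) (1 / 2) → η t = 1) →
        |(∫ t, a t * (t ^ (k - 1) * Real.log |t| * η t)) - Ck * φr * Real.log r|
          ≤ Ctilde := by
  obtain ⟨m, rfl⟩ : ∃ m, k = m + 2 := ⟨k - 2, by omega⟩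
  clear hk
  set c : ℝ := 2 ^ m with hc
  refine ⟨1 / 2, by norm_num, ?_⟩
  intro r Ck φr a η hr hrlt hCk hφ0 hφ1 hsupp hbound hmom hmomk hηsm hηsupp hηone
  simp only [show m + 2 - 2 = m by omega, show m + 2 - 1 = m + 1 by omega]
    at hsupp hbound hmom hmomk ⊢
  have hr0 : r ≠ 0 := ne_of_gt hr
  have hcpos : (0 : ℝ) < c := by positivity
  have hc1 : (1 : ℝ) ≤ c := one_le_pow₀ (by norm_num)
  have hcr_pos : 0 < c * r := by positivity
  -- `c * r < 1/2`
  have hcr : c * r < 1 / 2 := by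
    have h2 : (2 : ℝ) ^ (1 - ((m + 2 : ℕ) : ℤ)) = ((2 : ℝ) ^ (m + 1))⁻¹ := by
      have he : (1 - ((m + 2 : ℕ) : ℤ)) = -((m + 1 : ℕ) : ℤ) := by push_cast; ring
      rw [he, zpow_neg, zpow_natCast]
    rw [h2] at hrlt
    calc c * r < c * (2 ^ (m + 1))⁻¹ := by
          exact mul_lt_mul_of_pos_left hrlt hcpos
      _ = 1 / 2 := by rw [hc, pow_succ]; field_simp
  have hsub : Set.Icc (-(c * r)) (c * r) ⊆ Set.Icc (-(1 / 2) : ℝ) (1 / 2) :=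
    Set.Icc_subset_Icc (by linarith) (by linarith)
  -- pointwise splitting of the integrand
  have hpt : ∀ t, a t * (t ^ (m + 1) * Real.log |t| * η t)
      = a t * t ^ (m + 1) * (Real.log |t| - Real.log r)
        + a t * t ^ (m + 1) * Real.log r := by
    intro t
    by_cases ht : t ∈ Set.Icc (-(c * r)) (c * r)
    · rw [hηone t (hsub ht)]; ring
    · simp [hsupp t ht]
  set M : ℝ := ((2 ^ (m + 1) * r) ^ (m + 2))⁻¹ with hM
  have hMpos : 0 < M := by positivity
  set K : ℝ := M * (r ^ (m + 1) * c ^ (m + 2)) with hK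
  have hKpos : 0 < K := by positivity
  -- pointwise bound for the main term
  have hKpt : ∀ t, ‖a t * t ^ (m + 1) * (Real.log |t| - Real.log r)‖
      ≤ Set.indicator (Set.Icc (-(c * r)) (c * r)) (fun _ => K) t := by
    intro t
    by_cases ht : t ∈ Set.Icc (-(c * r)) (c * r)
    · rw [Set.indicator_of_mem ht]
      by_cases ht0 : t = 0
      · simp [ht0, hKpos.le]
      · have habs : 0 < |t| := abs_pos.2 ht0
        have htcr : |t| ≤ c * r := abs_le.2 ⟨by linarith [ht.1], ht.2⟩
        set s : ℝ := |t| / r with hs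
        have hs0 : 0 < s := div_pos habs hr
        have hsc : s ≤ c := by
          rw [hs, div_le_iff₀ hr]; exact htcr
        have hts : |t| = s * r := by rw [hs, div_mul_cancel₀ _ hr0]
        have hlogdiv : Real.log |t| - Real.log r = Real.log s := by
          rw [hs, Real.log_div (ne_of_gt habs) hr0]
        have hslog : s ^ (m + 1) * |Real.log s| ≤ c ^ (m + 2) := by
          by_cases hs1 : s ≤ 1
          · have hlog : |Real.log s| ≤ s⁻¹ := by
              rw [abs_of_nonpos (Real.log_nonpos hs0.le hs1)]
              have h3 := Real.log_le_sub_one_of_pos (inv_pos.2 hs0)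
              rw [Real.log_inv] at h3
              have h4 : (0:ℝ) < s⁻¹ := inv_pos.2 hs0
              linarith
            calc s ^ (m + 1) * |Real.log s|
                ≤ s ^ (m + 1) * s⁻¹ := by
                  exact mul_le_mul_of_nonneg_left hlog (by positivity)
              _ = s ^ m := by
                  rw [pow_succ, mul_assoc, mul_inv_cancel₀ (ne_of_gt hs0), mul_one]
              _ ≤ 1 := pow_le_one₀ hs0.le hs1
              _ ≤ c ^ (m + 2) := one_le_pow₀ hc1
          · push_neg at hs1
            have hlog : |Real.log s| ≤ s := by
              rw [abs_of_nonneg (Real.log_nonneg hs1.le)]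
              linarith [Real.log_le_sub_one_of_pos hs0]
            calc s ^ (m + 1) * |Real.log s|
                ≤ s ^ (m + 1) * s := mul_le_mul_of_nonneg_left hlog (by positivity)
              _ = s ^ (m + 2) := by ring
              _ ≤ c ^ (m + 2) := pow_le_pow_left₀ hs0.le hsc _
        have : ‖a t * t ^ (m + 1) * (Real.log |t| - Real.log r)‖
            = |a t| * (|t| ^ (m + 1) * |Real.log s|) := by
          rw [Real.norm_eq_abs, hlogdiv, abs_mul, abs_mul, abs_pow, mul_assoc]
        rw [this]
        have hb := hbound t
        calc |a t| * (|t| ^ (m + 1) * |Real.log s|)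
            ≤ M * (|t| ^ (m + 1) * |Real.log s|) := by
              apply mul_le_mul_of_nonneg_right hb (by positivity)
          _ = M * (r ^ (m + 1) * (s ^ (m + 1) * |Real.log s|)) := by
              rw [hts, mul_pow]; ring
          _ ≤ K := by
              rw [hK]
              apply mul_le_mul_of_nonneg_left _ hMpos.le
              exact mul_le_mul_of_nonneg_left hslog (by positivity)
    · rw [Set.indicator_of_notMem ht]
      simp [hsupp t ht]
  -- the constant bound is integrable
  have hbnd_int : Integrable
      (Set.indicator (Set.Icc (-(c * r)) (c * r)) (fun _ => K)) volume := by
    apply IntegrableOn.integrable_indicator _ measurableSet_Icc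
    exact integrableOn_const measure_Icc_lt_top.ne
  by_cases hmeas : AEStronglyMeasurable a volume
  · -- measurable case: the real estimate
    have hh_meas : AEStronglyMeasurable
        (fun t => a t * t ^ (m + 1) * (Real.log |t| - Real.log r)) volume := by
      exact (hmeas.mul (measurable_id.pow_const (m + 1)).aestronglyMeasurable).mul
        ((Real.measurable_log.comp measurable_abs).sub measurable_const).aestronglyMeasurable
    have hh_int : Integrable
        (fun t => a t * t ^ (m + 1) * (Real.log |t| - Real.log r)) volume :=
      hbnd_int.mono' hh_meas (Filter.Eventually.of_forall hKpt)
    -- integrability of `a t * t^(m+1)`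
    have hg1_meas : AEStronglyMeasurable (fun t => a t * t ^ (m + 1)) volume :=
      hmeas.mul (measurable_id.pow_const (m + 1)).aestronglyMeasurable
    have hg1_int : Integrable (fun t => a t * t ^ (m + 1)) volume := by
      apply hbnd_int.mono' hg1_meas
      apply Filter.Eventually.of_forall
      intro t
      by_cases ht : t ∈ Set.Icc (-(c * r)) (c * r)
      · rw [Set.indicator_of_mem ht]
        have htcr : |t| ≤ c * r := abs_le.2 ⟨by linarith [ht.1], ht.2⟩
        have : ‖a t * t ^ (m + 1)‖ = |a t| * |t| ^ (m + 1) := by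
          rw [Real.norm_eq_abs, abs_mul, abs_pow]
        rw [this, hK]
        calc |a t| * |t| ^ (m + 1) ≤ M * (c * r) ^ (m + 1) := by
              apply mul_le_mul (hbound t) (pow_le_pow_left₀ (abs_nonneg t) htcr _)
                (by positivity) hMpos.le
          _ ≤ M * (r ^ (m + 1) * c ^ (m + 2)) := by
              apply mul_le_mul_of_nonneg_left _ hMpos.le
              rw [mul_pow]
              calc c ^ (m + 1) * r ^ (m + 1) ≤ c ^ (m + 2) * r ^ (m + 1) := by
                    apply mul_le_mul_of_nonneg_right _ (by positivity)
                    exact pow_le_pow_right₀ hc1 (by omega)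
                _ = r ^ (m + 1) * c ^ (m + 2) := by ring
      · rw [Set.indicator_of_notMem ht]
        simp [hsupp t ht]
    have hInt : (∫ t, a t * (t ^ (m + 1) * Real.log |t| * η t))
        = (∫ t, a t * t ^ (m + 1) * (Real.log |t| - Real.log r))
          + Ck * φr * Real.log r := by
      rw [show (fun t => a t * (t ^ (m + 1) * Real.log |t| * η t))
          = fun t => a t * t ^ (m + 1) * (Real.log |t| - Real.log r)
            + a t * t ^ (m + 1) * Real.log r from funext hpt]
      rw [integral_add hh_int (hg1_int.mul_const _), integral_mul_const, hmomk]
    rw [hInt, add_sub_cancel_right]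
    have hnorm := norm_integral_le_of_norm_le hbnd_int (Filter.Eventually.of_forall hKpt)
    rw [Real.norm_eq_abs] at hnorm
    refine hnorm.trans ?_
    rw [integral_indicator_const _ measurableSet_Icc, Real.volume_real_Icc, smul_eq_mul,
      max_eq_left (by linarith)]
    have h1 : ((2 : ℝ) ^ (m + 1) * r) ^ (m + 2) = 2 ^ ((m + 1) * (m + 2)) * r ^ (m + 2) := by
      rw [mul_pow, ← pow_mul]
    have h2 : ((2:ℝ) ^ ((m + 1) * (m + 2))) ≠ 0 := by positivity
    refine le_of_eq ?_
    rw [hK, hM, h1, hc]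
    field_simp
    rw [show (m + 1) * (m + 2) = m * (m + 2) + m + 2 by ring, pow_add, pow_add]
    ring
  · -- non-measurable case: both integrals are junk `0`
    have h0 : ∀ᵐ t : ℝ ∂volume, t ≠ 0 := by
      rw [ae_iff]
      simp only [ne_eq, not_not]
      rw [show {t : ℝ | t = 0} = {0} from Set.setOf_eq_eq_singleton]
      exact measure_singleton 0
    have hnint1 : ¬ Integrable (fun t => a t * t ^ (m + 1)) volume := by
      intro hint
      apply hmeas
      have haesm : AEStronglyMeasurable
          (fun t => a t * t ^ (m + 1) * (t ^ (m + 1))⁻¹) volume :=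
        hint.aestronglyMeasurable.mul
          ((measurable_id.pow_const (m + 1)).inv.aestronglyMeasurable)
      apply haesm.congr
      filter_upwards [h0] with t ht
      exact mul_inv_cancel_right₀ (pow_ne_zero _ ht) (a t)
    have hzero1 : Ck * φr = 0 := by
      rw [← hmomk, integral_undef hnint1]
    have hnint2 : ¬ Integrable
        (fun t => a t * (t ^ (m + 1) * Real.log |t| * η t)) volume := by
      intro hint
      apply hmeas
      have haesm : AEStronglyMeasurable
          (fun t => a t * (t ^ (m + 1) * Real.log |t| * η t)
            * ((t ^ (m + 1) * Real.log |t| * η t))⁻¹) volume :=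
        hint.aestronglyMeasurable.mul
          (((((measurable_id.pow_const (m + 1)).mul
            (Real.measurable_log.comp measurable_abs)).mul
            hηsm.continuous.measurable).inv).aestronglyMeasurable)
      apply haesm.congr
      filter_upwards [h0] with t ht
      by_cases htm : t ∈ Set.Icc (-(c * r)) (c * r)
      · have habs : 0 < |t| := abs_pos.2 ht
        have htcr : |t| ≤ c * r := abs_le.2 ⟨by linarith [htm.1], htm.2⟩
        have hfne : t ^ (m + 1) * Real.log |t| * η t ≠ 0 := by
          rw [hηone t (hsub htm), mul_one]
          exact mul_ne_zero (pow_ne_zero _ ht)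
            (ne_of_lt (Real.log_neg habs (by linarith)))
        exact mul_inv_cancel_right₀ hfne (a t)
      · simp [hsupp t htm]
    rw [integral_undef hnint2, hzero1]
    simp only [zero_mul, sub_zero, zero_sub, abs_neg, abs_zero]
    positivity
end

section
/- Let 1 ≤ s < ∞, δ > 0, 0 < r < 1, z ∈ R^n, and let K satisfy the L^s Hörmander-type condition: for all j ∈ N and |y - z| < r, (∫_{A_j(z,r)} |K(x,y) - K(x,z)|^s dx)^{1/s} ≤ C |A_j(z,r)|^{1/s - 1} 2^{-jδ}, where A_j(z,r) = {2^j r ≤ |x - z| < 2^{j+1} r}. If a ∈ L^1 is supported in B(z, r) with ∫ a = 0 and ∫|a| ≤ r^{-n(1/p - 1)}, and λ < n(s-1) + sδ, then ∫_{|x-z| ≥ 2r} |Ta(x)|^s |x - z|^λ dx ≤ C' r^{λ + n(1 - s/p)}, where Ta(x) = ∫ K(x,y) a(y) dy for x outside 2B. -/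
/-!
Since `∫ a = 0`, `Ta(x) = ∫ (K(x,y) - K(x,z)) a(y) dy`. On the dyadic annulus
`A = {ρ ≤ |x - z| < 2ρ}`, Hölder's inequality with weight `|a|` followed by Tonelli
(Minkowski's integral inequality) bounds `∫_A |Ta|^s` by `‖a‖₁^s` times the `s`-th power of the
Hörmander bound. As `|A| ≳ ρ^n` and `|x - z|^λ ≲ ρ^λ` on `A`, the annulus `ρ = 2^k r`
contributes `≲ ‖a‖₁^s r^(λ + n(1-s)) 2^(k(λ - n(s-1) - sδ))`, a convergent geometric series
because `λ < n(s-1) + sδ`; the size condition on `a` turns `‖a‖₁^s r^(λ + n(1-s))` into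
`r^(λ + n(1 - s/p))`.
-/

open MeasureTheory Metric ENNReal

section Minkowski

variable {α β : Type*} [MeasurableSpace α] [MeasurableSpace β]

theorem ENNReal.lintegral_mul_rpow_le {μ : Measure α} {f w : α → ℝ≥0∞}
    (hf : AEMeasurable f μ) (hw : AEMeasurable w μ) {s : ℝ} (hs : 1 ≤ s) :
    (∫⁻ y, f y * w y ∂μ) ^ s ≤ (∫⁻ y, w y ∂μ) ^ (s - 1) * ∫⁻ y, f y ^ s * w y ∂μ := by
  have hs0 : 0 < s := one_pos.trans_le hs
  have hinv : 1 / s ≤ 1 := (div_le_one hs0).2 hs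
  have hpt : ∀ y, (f y ^ s * w y) ^ (1 / s) * w y ^ (1 - 1 / s) = f y * w y := fun y => by
    rw [ENNReal.mul_rpow_of_nonneg _ _ (by positivity), ← ENNReal.rpow_mul,
      mul_one_div_cancel hs0.ne', ENNReal.rpow_one, mul_assoc,
      ← ENNReal.rpow_add_of_nonneg _ _ (by positivity) (sub_nonneg.2 hinv),
      add_sub_cancel, ENNReal.rpow_one]
  have holder := ENNReal.lintegral_mul_norm_pow_le ((hf.pow_const s).mul hw) hw
    (by positivity) (sub_nonneg.2 hinv) (add_sub_cancel _ _)
  simp only [Pi.mul_apply, hpt] at holder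
  calc (∫⁻ y, f y * w y ∂μ) ^ s
      ≤ ((∫⁻ y, f y ^ s * w y ∂μ) ^ (1 / s) * (∫⁻ y, w y ∂μ) ^ (1 - 1 / s)) ^ s :=
        ENNReal.rpow_le_rpow holder hs0.le
    _ = (∫⁻ y, w y ∂μ) ^ (s - 1) * ∫⁻ y, f y ^ s * w y ∂μ := by
        rw [ENNReal.mul_rpow_of_nonneg _ _ hs0.le, ← ENNReal.rpow_mul, ← ENNReal.rpow_mul,
          one_div_mul_cancel hs0.ne', ENNReal.rpow_one, sub_mul, one_div_mul_cancel hs0.ne',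
          one_mul, mul_comm]

theorem lintegral_rpow_lintegral_mul_le {μ : Measure α} {ν : Measure β} [SFinite μ] [SFinite ν]
    {g : α → β → ℝ≥0∞} {w : β → ℝ≥0∞} {s : ℝ} {B : ℝ≥0∞} (hs : 1 ≤ s)
    (hg : Measurable (Function.uncurry g)) (hw : AEMeasurable w ν)
    (hB : ∀ y, w y ≠ 0 → ∫⁻ x, g x y ^ s ∂μ ≤ B) :
    ∫⁻ x, (∫⁻ y, g x y * w y ∂ν) ^ s ∂μ ≤ (∫⁻ y, w y ∂ν) ^ s * B := by
  have hgw : AEMeasurable (Function.uncurry fun x y => g x y ^ s * w y) (μ.prod ν) :=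
    (hg.pow_const s).aemeasurable.mul hw.comp_snd
  have hB' : ∀ y, (∫⁻ x, g x y ^ s ∂μ) * w y ≤ B * w y := fun y => by
    rcases eq_or_ne (w y) 0 with h | h
    · simp [h]
    · exact mul_le_mul_left (hB y h) _
  calc ∫⁻ x, (∫⁻ y, g x y * w y ∂ν) ^ s ∂μ
      ≤ ∫⁻ x, (∫⁻ y, w y ∂ν) ^ (s - 1) * ∫⁻ y, g x y ^ s * w y ∂ν ∂μ :=
        lintegral_mono fun x =>
          ENNReal.lintegral_mul_rpow_le hg.of_uncurry_left.aemeasurable hw hs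
    _ = (∫⁻ y, w y ∂ν) ^ (s - 1) * ∫⁻ y, (∫⁻ x, g x y ^ s ∂μ) * w y ∂ν := by
        have hm : AEMeasurable (fun x => ∫⁻ y, g x y ^ s * w y ∂ν) μ :=
          hgw.lintegral_prod_right'
        rw [lintegral_const_mul'' _ hm, lintegral_lintegral_swap hgw]
        simp_rw [lintegral_mul_const _ (hg.of_uncurry_right.pow_const s)]
    _ ≤ (∫⁻ y, w y ∂ν) ^ (s - 1) * (B * ∫⁻ y, w y ∂ν) := by
        rw [← lintegral_const_mul'' _ hw]
        exact mul_le_mul_right (lintegral_mono hB') _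
    _ = (∫⁻ y, w y ∂ν) ^ s * B := by
        rw [mul_comm B, ← mul_assoc]
        congr 1
        nth_rw 2 [← ENNReal.rpow_one (∫⁻ y, w y ∂ν)]
        rw [← ENNReal.rpow_add_of_nonneg _ _ (sub_nonneg.2 hs) zero_le_one, sub_add_cancel]

theorem enorm_integral_mul_le_lintegral_enorm_sub_mul {𝕜 : Type*} [RCLike 𝕜] {μ : Measure α}
    {f a : α → 𝕜} (ha : Integrable a μ) (ha0 : ∫ y, a y ∂μ = 0) (c : 𝕜) :
    ‖∫ y, f y * a y ∂μ‖ₑ ≤ ∫⁻ y, ‖f y - c‖ₑ * ‖a y‖ₑ ∂μ := by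
  by_cases hfa : Integrable (fun y => f y * a y) μ
  · have hsub : ∫ y, f y * a y ∂μ = ∫ y, (f y - c) * a y ∂μ := by
      have hca : Integrable (fun y => c * a y) μ := ha.const_mul c
      simp_rw [sub_mul]
      rw [integral_sub hfa hca, integral_const_mul, ha0, mul_zero, sub_zero]
    rw [hsub]
    simpa only [enorm_mul] using enorm_integral_le_lintegral_enorm (μ := μ) fun y => (f y - c) * a y
  · simp [integral_undef hfa]

theorem lintegral_enorm_integral_mul_rpow_le {μ : Measure α} {ν : Measure β} [SFinite μ] [SFinite ν]
    {𝕜 : Type*} [RCLike 𝕜] {K : α → β → 𝕜} {a : β → 𝕜} {s : ℝ} {B : ℝ≥0∞} (hs : 1 ≤ s)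
    (hK : Measurable (Function.uncurry K)) (ha : Integrable a ν) (ha0 : ∫ y, a y ∂ν = 0) (y₀ : β)
    (hB : ∀ y, a y ≠ 0 → ∫⁻ x, ‖K x y - K x y₀‖ₑ ^ s ∂μ ≤ B) :
    ∫⁻ x, ‖∫ y, K x y * a y ∂ν‖ₑ ^ s ∂μ ≤ (∫⁻ y, ‖a y‖ₑ ∂ν) ^ s * B := by
  have hdiff : Measurable (Function.uncurry fun x y => ‖K x y - K x y₀‖ₑ) :=
    (hK.sub (hK.comp (measurable_fst.prodMk measurable_const))).enorm
  calc ∫⁻ x, ‖∫ y, K x y * a y ∂ν‖ₑ ^ s ∂μ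
      ≤ ∫⁻ x, (∫⁻ y, ‖K x y - K x y₀‖ₑ * ‖a y‖ₑ ∂ν) ^ s ∂μ := by
        gcongr with x
        exact enorm_integral_mul_le_lintegral_enorm_sub_mul ha ha0 _
    _ ≤ (∫⁻ y, ‖a y‖ₑ ∂ν) ^ s * B :=
        lintegral_rpow_lintegral_mul_le hs hdiff ha.aemeasurable.enorm
          fun y hy => hB y (enorm_ne_zero.1 hy)

end Minkowski

theorem mul_rpow_one_div_sub_one_mul_rpow_le {C V m ε s : ℝ} (hC : 0 ≤ C) (hε : 0 ≤ ε)
    (hs : 1 ≤ s) (hm : 0 < m) (hmV : m ≤ V) :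
    (C * V ^ (1 / s - 1) * ε) ^ s ≤ C ^ s * m ^ (1 - s) * ε ^ s := by
  have hV : 0 < V := hm.trans_le hmV
  have hs0 : s ≠ 0 := by positivity
  rw [Real.mul_rpow (mul_nonneg hC (Real.rpow_nonneg hV.le _)) hε,
    Real.mul_rpow hC (Real.rpow_nonneg hV.le _),
    ← Real.rpow_mul hV.le, sub_mul, one_div_mul_cancel hs0, one_mul]
  have := Real.rpow_le_rpow_of_nonpos hm hmV (by linarith : 1 - s ≤ 0)
  gcongr

section DyadicAnnulus

variable {E : Type*} [NormedAddCommGroup E]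

def dyadicAnnulus (z : E) (ρ : ℝ) : Set E := {x | ρ ≤ ‖x - z‖ ∧ ‖x - z‖ < 2 * ρ}

theorem dyadicAnnulus_eq_ball_sdiff_ball (z : E) (ρ : ℝ) :
    dyadicAnnulus z ρ = ball z (2 * ρ) \ ball z ρ := by
  ext x
  simp [dyadicAnnulus, dist_eq_norm, and_comm]

theorem setOf_two_pow_le_norm_sub_lt_eq_dyadicAnnulus (z : E) (r : ℝ) (j : ℕ) :
    {x : E | 2 ^ j * r ≤ ‖x - z‖ ∧ ‖x - z‖ < 2 ^ (j + 1) * r} = dyadicAnnulus z (2 ^ j * r) := by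
  simp only [dyadicAnnulus, pow_succ, mul_comm _ (2 : ℝ), mul_assoc]

theorem rpow_le_of_mem_dyadicAnnulus {z x : E} {ρ : ℝ} (hx : x ∈ dyadicAnnulus z ρ) (l : ℝ) :
    ‖x - z‖ ^ l ≤ 2 ^ |l| * ρ ^ l := by
  obtain ⟨hρx, hx2⟩ := hx
  have hρ : 0 < ρ := by linarith [norm_nonneg (x - z)]
  rcases le_total 0 l with hl | hl
  · calc ‖x - z‖ ^ l ≤ (2 * ρ) ^ l := Real.rpow_le_rpow (norm_nonneg _) hx2.le hl
      _ = 2 ^ |l| * ρ ^ l := by rw [abs_of_nonneg hl, Real.mul_rpow zero_le_two hρ.le]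
  · calc ‖x - z‖ ^ l ≤ ρ ^ l := Real.rpow_le_rpow_of_nonpos hρ hρx hl
      _ ≤ 2 ^ |l| * ρ ^ l :=
        le_mul_of_one_le_left (by positivity) (Real.one_le_rpow one_le_two (abs_nonneg l))

variable [MeasurableSpace E]

theorem setLIntegral_le_tsum_dyadicAnnulus {μ : Measure E} (f : E → ℝ≥0∞) (z : E) {r : ℝ}
    (hr : 0 < r) :
    ∫⁻ x in {x | r ≤ ‖x - z‖}, f x ∂μ ≤ ∑' k : ℕ, ∫⁻ x in dyadicAnnulus z (2 ^ k * r), f x ∂μ := by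
  refine (lintegral_mono_set fun x (hx : r ≤ ‖x - z‖) => ?_).trans (lintegral_iUnion_le _ _)
  obtain ⟨k, hk, hk'⟩ := exists_nat_pow_near ((one_le_div hr).2 hx) one_lt_two
  refine Set.mem_iUnion.2 ⟨k, ?_, ?_⟩
  · rwa [le_div_iff₀ hr] at hk
  · rwa [div_lt_iff₀ hr, pow_succ, mul_comm _ (2 : ℝ), mul_assoc] at hk'

theorem measurableSet_dyadicAnnulus [OpensMeasurableSpace E] (z : E) (ρ : ℝ) :
    MeasurableSet (dyadicAnnulus z ρ) := by
  rw [dyadicAnnulus_eq_ball_sdiff_ball]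
  exact measurableSet_ball.diff measurableSet_ball

theorem setLIntegral_dyadicAnnulus_mul_rpow_le [OpensMeasurableSpace E] {μ : Measure E}
    (f : E → ℝ≥0∞) (z : E) (ρ l : ℝ) :
    ∫⁻ x in dyadicAnnulus z ρ, f x * ENNReal.ofReal (‖x - z‖ ^ l) ∂μ
      ≤ (∫⁻ x in dyadicAnnulus z ρ, f x ∂μ) * ENNReal.ofReal (2 ^ |l| * ρ ^ l) :=
  calc ∫⁻ x in dyadicAnnulus z ρ, f x * ENNReal.ofReal (‖x - z‖ ^ l) ∂μ
      ≤ ∫⁻ x in dyadicAnnulus z ρ, f x * ENNReal.ofReal (2 ^ |l| * ρ ^ l) ∂μ :=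
        setLIntegral_mono' (measurableSet_dyadicAnnulus z ρ) fun x hx => by
          gcongr
          exact rpow_le_of_mem_dyadicAnnulus hx l
    _ = (∫⁻ x in dyadicAnnulus z ρ, f x ∂μ) * ENNReal.ofReal (2 ^ |l| * ρ ^ l) :=
        lintegral_mul_const' _ _ ofReal_ne_top

variable [NormedSpace ℝ E] [FiniteDimensional ℝ E] [BorelSpace E]
  (μ : Measure E) [μ.IsAddHaarMeasure]

theorem measure_ball_mul_le_measure_dyadicAnnulus [Nontrivial E] (z : E) {ρ : ℝ} (hρ : 0 ≤ ρ) :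
    (μ (ball 0 1)).toReal * ρ ^ Module.finrank ℝ E ≤ (μ (dyadicAnnulus z ρ)).toReal := by
  set d := Module.finrank ℝ E
  have hball (t : ℝ) (ht : 0 ≤ t) : μ (ball z t) = ENNReal.ofReal (t ^ d) * μ (ball 0 1) :=
    Measure.addHaar_ball μ z ht
  have hgrowth : 2 * ρ ^ d ≤ (2 * ρ) ^ d := by
    rw [mul_pow]
    exact mul_le_mul_of_nonneg_right
      (le_self_pow₀ one_le_two Module.finrank_pos.ne') (by positivity)
  have hmeasure : ENNReal.ofReal (ρ ^ d) * μ (ball 0 1) ≤ μ (dyadicAnnulus z ρ) := by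
    rw [dyadicAnnulus_eq_ball_sdiff_ball]
    refine le_trans ?_ le_measure_sdiff
    rw [hball _ (by positivity), hball _ hρ]
    refine ENNReal.le_sub_of_add_le_right (by finiteness) ?_
    rw [← add_mul, ← ENNReal.ofReal_add (by positivity) (by positivity)]
    gcongr
    linarith
  have hfinite : μ (dyadicAnnulus z ρ) ≠ ∞ := by
    rw [dyadicAnnulus_eq_ball_sdiff_ball]
    exact ne_top_of_le_ne_top measure_ball_lt_top.ne (measure_mono Set.sdiff_subset)
  rw [mul_comm]
  simpa [ENNReal.toReal_mul, ENNReal.toReal_ofReal (by positivity : (0:ℝ) ≤ ρ ^ d)] using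
    ENNReal.toReal_mono hfinite hmeasure

theorem mul_toReal_measure_dyadicAnnulus_rpow_le [Nontrivial E] (z : E) {ρ C ε s : ℝ}
    (hρ : 0 < ρ) (hC : 0 ≤ C) (hε : 0 ≤ ε) (hs : 1 ≤ s) :
    (C * (μ (dyadicAnnulus z ρ)).toReal ^ (1 / s - 1) * ε) ^ s
      ≤ C ^ s * (μ (ball 0 1)).toReal ^ (1 - s) * ρ ^ (Module.finrank ℝ E * (1 - s) : ℝ) *
          ε ^ s := by
  have hc : 0 < (μ (ball (0 : E) 1)).toReal :=
    ENNReal.toReal_pos (measure_ball_pos μ 0 one_pos).ne' measure_ball_lt_top.ne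
  refine (mul_rpow_one_div_sub_one_mul_rpow_le hC hε hs (by positivity)
    (measure_ball_mul_le_measure_dyadicAnnulus μ z hρ.le)).trans_eq ?_
  rw [Real.mul_rpow hc.le (by positivity), ← Real.rpow_natCast, ← Real.rpow_mul hρ.le]
  ring

theorem setLIntegral_dyadicAnnulus_enorm_integral_rpow_le {𝕜 : Type*} [RCLike 𝕜]
    {K : E → E → 𝕜} {a : E → 𝕜} {z : E} {r ρ s l C ε : ℝ} (hs : 1 ≤ s) (hC : 0 ≤ C) (hε : 0 ≤ ε)
    (hK : Measurable (Function.uncurry K)) (ha : Integrable a μ)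
    (hsupp : ∀ y, y ∉ ball z r → a y = 0) (ha0 : ∫ y, a y ∂μ = 0)
    (hH : ∀ y, ‖y - z‖ < r → (∫⁻ x in dyadicAnnulus z ρ, ‖K x y - K x z‖ₑ ^ s ∂μ) ^ (1 / s)
      ≤ ENNReal.ofReal (C * (μ (dyadicAnnulus z ρ)).toReal ^ (1 / s - 1) * ε)) :
    ∫⁻ x in dyadicAnnulus z ρ, ‖∫ y, K x y * a y ∂μ‖ₑ ^ s * ENNReal.ofReal (‖x - z‖ ^ l) ∂μ
      ≤ ENNReal.ofReal (2 ^ |l| * C ^ s * (μ (ball 0 1)).toReal ^ (1 - s) *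
          (∫ y, ‖a y‖ ∂μ) ^ s * ρ ^ (l + Module.finrank ℝ E * (1 - s)) * ε ^ s) := by
  set A := dyadicAnnulus z ρ
  rcases A.eq_empty_or_nonempty with hA | ⟨x₀, hx₀⟩
  · simp [hA]
  have hρ : 0 < ρ := by linarith [hx₀.1, hx₀.2]
  have : Nontrivial E := nontrivial_of_ne x₀ z fun h => by
    have := hx₀.1
    rw [h, sub_self, norm_zero] at this
    linarith
  set M := ∫ y, ‖a y‖ ∂μ
  set H := C * (μ A).toReal ^ (1 / s - 1) * ε
  have hs0 : 0 < s := one_pos.trans_le hs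
  have hM : 0 ≤ M := integral_nonneg fun y => norm_nonneg _
  have hH0 : 0 ≤ H := mul_nonneg (mul_nonneg hC (Real.rpow_nonneg toReal_nonneg _)) hε
  have hHs : ∀ y, a y ≠ 0 → ∫⁻ x in A, ‖K x y - K x z‖ₑ ^ s ∂μ ≤ ENNReal.ofReal H ^ s := by
    intro y hy
    have hyz : ‖y - z‖ < r := by simpa [dist_eq_norm] using not_imp_comm.1 (hsupp y) hy
    exact (ENNReal.rpow_inv_le_iff hs0).1 (by simpa only [one_div] using hH y hyz)
  calc ∫⁻ x in A, ‖∫ y, K x y * a y ∂μ‖ₑ ^ s * ENNReal.ofReal (‖x - z‖ ^ l) ∂μ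
      ≤ (∫⁻ x in A, ‖∫ y, K x y * a y ∂μ‖ₑ ^ s ∂μ) * ENNReal.ofReal (2 ^ |l| * ρ ^ l) :=
        setLIntegral_dyadicAnnulus_mul_rpow_le _ z ρ l
    _ ≤ (ENNReal.ofReal M ^ s * ENNReal.ofReal H ^ s) * ENNReal.ofReal (2 ^ |l| * ρ ^ l) := by
        rw [ofReal_integral_norm_eq_lintegral_enorm ha]
        gcongr
        exact lintegral_enorm_integral_mul_rpow_le hs hK ha ha0 z hHs
    _ = ENNReal.ofReal (M ^ s * H ^ s * (2 ^ |l| * ρ ^ l)) := by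
        rw [ofReal_rpow_of_nonneg hM hs0.le, ofReal_rpow_of_nonneg hH0 hs0.le,
          ← ENNReal.ofReal_mul (by positivity), ← ENNReal.ofReal_mul (by positivity)]
    _ ≤ _ := by
        have hHle := mul_toReal_measure_dyadicAnnulus_rpow_le μ z hρ hC hε hs
        refine ENNReal.ofReal_le_ofReal ((mul_le_mul_of_nonneg_right
          (mul_le_mul_of_nonneg_left hHle (by positivity)) (by positivity)).trans_eq ?_)
        rw [Real.rpow_add hρ]
        ring

end DyadicAnnulus

theorem rpow_mul_rpow_le_of_le_rpow {M r n p s l : ℝ} (hr : 0 < r) (hM0 : 0 ≤ M) (hs : 0 ≤ s)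
    (hM : M ≤ r ^ (-(n * (1 / p - 1)))) :
    M ^ s * r ^ (l + n * (1 - s)) ≤ r ^ (l + n * (1 - s / p)) :=
  calc M ^ s * r ^ (l + n * (1 - s))
      ≤ (r ^ (-(n * (1 / p - 1)))) ^ s * r ^ (l + n * (1 - s)) := by gcongr
    _ = r ^ (l + n * (1 - s / p)) := by
      rw [← Real.rpow_mul hr.le, ← Real.rpow_add hr]
      ring_nf

theorem tsum_ofReal_mul_geometric {T q : ℝ} (hT : 0 ≤ T) (hq0 : 0 ≤ q) (hq1 : q < 1) :
    ∑' k : ℕ, ENNReal.ofReal (T * q ^ k) = ENNReal.ofReal (T * (1 - q)⁻¹) := by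
  rw [← ENNReal.ofReal_tsum_of_nonneg (fun k => by positivity)
    ((summable_geometric_of_lt_one hq0 hq1).mul_left T), tsum_mul_left,
    tsum_geometric_of_lt_one hq0 hq1]

theorem two_pow_mul_rpow_mul_rpow_eq {r : ℝ} (hr : 0 < r) (k : ℕ) (e δ s : ℝ) :
    ((2 : ℝ) ^ k * r) ^ e * ((2 : ℝ) ^ (-(k : ℝ) * δ)) ^ s
      = r ^ e * ((2 : ℝ) ^ (e - s * δ)) ^ k := by
  rw [Real.mul_rpow (by positivity) hr.le, ← Real.rpow_natCast, ← Real.rpow_natCast,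
    ← Real.rpow_mul zero_le_two, ← Real.rpow_mul zero_le_two, ← Real.rpow_mul zero_le_two,
    mul_right_comm, ← Real.rpow_add two_pos]
  ring_nf

theorem stmt19_general (n : ℕ) (p s δ l C : ℝ)
    (hs : 1 ≤ s) (hC : 0 < C) (hl : l < (n : ℝ) * (s - 1) + s * δ) :
    ∃ C' : ℝ, 0 < C' ∧
      ∀ (K : EuclideanSpace ℝ (Fin n) → EuclideanSpace ℝ (Fin n) → ℂ)
        (a : EuclideanSpace ℝ (Fin n) → ℂ)
        (z : EuclideanSpace ℝ (Fin n)) (r : ℝ),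
        0 < r → r < 1 → Measurable (Function.uncurry K) → Integrable a →
        (∀ x, x ∉ ball z r → a x = 0) →
        (∫ x, a x) = 0 →
        (∫ x, ‖a x‖) ≤ r ^ (-((n : ℝ) * (1 / p - 1))) →
        (∀ j : ℕ, ∀ y, ‖y - z‖ < r →
          (∫⁻ x in {x : EuclideanSpace ℝ (Fin n) |
              2 ^ j * r ≤ ‖x - z‖ ∧ ‖x - z‖ < 2 ^ (j + 1) * r},
            (‖K x y - K x z‖₊ : ℝ≥0∞) ^ s) ^ (1 / s)
          ≤ ENNReal.ofReal (C *
              (volume {x : EuclideanSpace ℝ (Fin n) |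
                2 ^ j * r ≤ ‖x - z‖ ∧ ‖x - z‖ < 2 ^ (j + 1) * r}).toReal ^ (1 / s - 1) *
              2 ^ (-(j : ℝ) * δ))) →
        ∫⁻ x in {x : EuclideanSpace ℝ (Fin n) | 2 * r ≤ ‖x - z‖},
            (‖∫ y, K x y * a y‖₊ : ℝ≥0∞) ^ s * ENNReal.ofReal (‖x - z‖ ^ l)
          ≤ ENNReal.ofReal (C' * r ^ (l + (n : ℝ) * (1 - s / p))) := by
  set c := (volume (ball (0 : EuclideanSpace ℝ (Fin n)) 1)).toReal
  set D := 2 ^ |l| * C ^ s * c ^ (1 - s)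
  set q := (2 : ℝ) ^ (l + n * (1 - s) - s * δ)
  have hc : 0 < c := ENNReal.toReal_pos (measure_ball_pos _ 0 one_pos).ne' measure_ball_lt_top.ne
  have hq1 : q < 1 := Real.rpow_lt_one_of_one_lt_of_neg one_lt_two (by linarith)
  refine ⟨D * (1 - q)⁻¹, by have := sub_pos.2 hq1; positivity, ?_⟩
  intro K a z r hr _ hK ha hsupp ha0 hM hH
  simp only [← enorm_eq_nnnorm, setOf_two_pow_le_norm_sub_lt_eq_dyadicAnnulus] at hH ⊢
  set F := fun x => ‖∫ y, K x y * a y‖ₑ ^ s * ENNReal.ofReal (‖x - z‖ ^ l)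
  set M := ∫ y, ‖a y‖
  have hM0 : 0 ≤ M := integral_nonneg fun y => norm_nonneg _
  have hannulus (k : ℕ) : ∫⁻ x in dyadicAnnulus z (2 ^ k * r), F x ≤
      ENNReal.ofReal (D * M ^ s * r ^ (l + n * (1 - s)) * q ^ k) := by
    refine (setLIntegral_dyadicAnnulus_enorm_integral_rpow_le volume hs hC.le (by positivity)
      hK ha hsupp ha0 (hH k)).trans_eq ?_
    rw [finrank_euclideanSpace_fin, mul_assoc _ (_ ^ (l + _)), two_pow_mul_rpow_mul_rpow_eq hr]
    simp only [D, c, M, q]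
    ring_nf
  calc ∫⁻ x in {x | 2 * r ≤ ‖x - z‖}, F x
      ≤ ∫⁻ x in {x | r ≤ ‖x - z‖}, F x :=
        lintegral_mono_set fun x (hx : 2 * r ≤ ‖x - z‖) => (by linarith : r ≤ ‖x - z‖)
    _ ≤ ∑' k : ℕ, ENNReal.ofReal (D * M ^ s * r ^ (l + n * (1 - s)) * q ^ k) :=
        (setLIntegral_le_tsum_dyadicAnnulus F z hr).trans (ENNReal.tsum_le_tsum hannulus)
    _ = ENNReal.ofReal (D * M ^ s * r ^ (l + n * (1 - s)) * (1 - q)⁻¹) :=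
        tsum_ofReal_mul_geometric (by positivity) (by positivity) hq1
    _ ≤ ENNReal.ofReal (D * (1 - q)⁻¹ * r ^ (l + n * (1 - s / p))) := by
        have := sub_pos.2 hq1
        rw [mul_assoc D, mul_right_comm]
        gcongr
        exact rpow_mul_rpow_le_of_le_rpow hr hM0 (by positivity) hM

/-- Tail estimate (M2) for `Ta`: under the `L^s` Hörmander-type condition on the
kernel and for `a` supported in `B(z,r)` with vanishing integral and
`∫|a| ≤ r^{-n(1/p-1)}`, one has
`∫_{|x-z| ≥ 2r} |Ta(x)|^s |x-z|^λ dx ≤ C' r^{λ + n(1 - s/p)}` whenever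
`λ < n(s-1) + sδ`. -/
theorem stmt19 (n : ℕ) (p s δ l C : ℝ)
    (hp : 0 < p) (hp1 : p ≤ 1) (hs : 1 ≤ s) (hps : p < s)
    (hδ : 0 < δ) (hC : 0 < C) (hl : l < (n : ℝ) * (s - 1) + s * δ) :
    ∃ C' : ℝ, 0 < C' ∧
      ∀ (K : EuclideanSpace ℝ (Fin n) → EuclideanSpace ℝ (Fin n) → ℂ)
        (a : EuclideanSpace ℝ (Fin n) → ℂ)
        (z : EuclideanSpace ℝ (Fin n)) (r : ℝ),
        0 < r → r < 1 → Measurable (Function.uncurry K) → Integrable a →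
        (∀ x, x ∉ ball z r → a x = 0) →
        (∫ x, a x) = 0 →
        (∫ x, ‖a x‖) ≤ r ^ (-((n : ℝ) * (1 / p - 1))) →
        (∀ j : ℕ, ∀ y, ‖y - z‖ < r →
          (∫⁻ x in {x : EuclideanSpace ℝ (Fin n) |
              2 ^ j * r ≤ ‖x - z‖ ∧ ‖x - z‖ < 2 ^ (j + 1) * r},
            (‖K x y - K x z‖₊ : ℝ≥0∞) ^ s) ^ (1 / s)
          ≤ ENNReal.ofReal (C *
              (volume {x : EuclideanSpace ℝ (Fin n) |
                2 ^ j * r ≤ ‖x - z‖ ∧ ‖x - z‖ < 2 ^ (j + 1) * r}).toReal ^ (1 / s - 1) *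
              2 ^ (-(j : ℝ) * δ))) →
        ∫⁻ x in {x : EuclideanSpace ℝ (Fin n) | 2 * r ≤ ‖x - z‖},
            (‖∫ y, K x y * a y‖₊ : ℝ≥0∞) ^ s * ENNReal.ofReal (‖x - z‖ ^ l)
          ≤ ENNReal.ofReal (C' * r ^ (l + (n : ℝ) * (1 - s / p))) :=
  stmt19_general n p s δ l C hs hC hl
end
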